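/- (Lemma 4.7: lower bound for the boundary L^q norm of u_ε) Let N ≥ 3, 2 ≤ q < 2_*, and θ_N = N − 1 − (N−2)q/2. Let u_ε be as defined in the context, with a fixed admissible cutoff φ. Then there exist b > 0 and ε_0 > 0 such that for all 0 < ε < ε_0: if 2 < q < 2_*, then ∫_{ℝ^{N−1}} e^{|x′|²/4} u_ε(x′,0)^q dx′ ≥ b ε^{θ_N}; if q = 2 and N ≥ 4, then ∫_{ℝ^{N−1}} e^{|x′|²/4} u_ε(x′,0)² dx′ ≥ b ε; if q = 2 and N = 3, then ∫_{ℝ²} e^{|x′|²/4} u_ε(x′,0)² dx′ ≥ b ε|ln ε|. -/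

import Mathlib

open MeasureTheory Real Filter Topology Asymptotics

noncomputable section

/-- The index of the last coordinate of `ℝ^N`. -/
def lastIdx (N : ℕ) (hN : 0 < N) : Fin N := ⟨N - 1, by omega⟩

/-- The open upper half-space `ℝ^N_+ = {x : x_N > 0}`. -/
def upperHalf (N : ℕ) (hN : 0 < N) : Set (EuclideanSpace ℝ (Fin N)) :=
  {x | 0 < x (lastIdx N hN)}

/-- The closed upper half-space `{x : x_N ≥ 0}`. -/
def closedHalf (N : ℕ) (hN : 0 < N) : Set (EuclideanSpace ℝ (Fin N)) :=
  {x | 0 ≤ x (lastIdx N hN)}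

/-- The embedding `ℝ^{N-1} → ℝ^N`, `x' ↦ (x', 0)`. -/
def pad (N : ℕ) (x' : EuclideanSpace ℝ (Fin (N - 1))) : EuclideanSpace ℝ (Fin N) :=
  (EuclideanSpace.equiv (Fin N) ℝ).symm fun i =>
    if h : (i : ℕ) < N - 1 then x' ⟨i, h⟩ else 0

/-- The partial derivative `∂u/∂x_i`. -/
def pderiv' {N : ℕ} (u : EuclideanSpace ℝ (Fin N) → ℝ) (i : Fin N)
    (x : EuclideanSpace ℝ (Fin N)) : ℝ :=
  fderiv ℝ u x (EuclideanSpace.single i 1)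

/-- The Laplacian `Δu = ∑_i ∂²u/∂x_i²`. -/
def lap {N : ℕ} (u : EuclideanSpace ℝ (Fin N) → ℝ) (x : EuclideanSpace ℝ (Fin N)) : ℝ :=
  ∑ i, pderiv' (pderiv' u i) i x

/-- The radial derivative `x · ∇u`. -/
def radDeriv {N : ℕ} (u : EuclideanSpace ℝ (Fin N) → ℝ) (x : EuclideanSpace ℝ (Fin N)) : ℝ :=
  ∑ i, x i * pderiv' u i x

/-- The exponential weight `K(x) = e^{|x|²/4}`. -/
def Kw {N : ℕ} (x : EuclideanSpace ℝ (Fin N)) : ℝ := Real.exp (‖x‖ ^ 2 / 4)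

/-- `|x'|²`, the squared norm of the first `N - 1` coordinates of `x`. -/
def normSq' {N : ℕ} (x : EuclideanSpace ℝ (Fin N)) : ℝ :=
  ∑ i : Fin N, if (i : ℕ) < N - 1 then (x i) ^ 2 else 0

/-- `k_N = (√(N(N-2)))^{(N-2)/2}`. -/
def kN (N : ℕ) : ℝ := Real.sqrt ((N : ℝ) * ((N : ℝ) - 2)) ^ (((N : ℝ) - 2) / 2)

/-- `x_N⁰ = √(N/(N-2))`. -/
def xN0 (N : ℕ) : ℝ := Real.sqrt ((N : ℝ) / ((N : ℝ) - 2))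

/-- The critical Sobolev exponent `2^* = 2N/(N-2)`. -/
def pstar (N : ℕ) : ℝ := 2 * (N : ℝ) / ((N : ℝ) - 2)

/-- The critical trace exponent `2_* = 2(N-1)/(N-2)`. -/
def pstarb (N : ℕ) : ℝ := 2 * ((N : ℝ) - 1) / ((N : ℝ) - 2)

/-- The instanton `U_ε` (denoted `φ_{ε,1}` in the paper). -/
def Ueps (N : ℕ) (hN : 0 < N) (ε : ℝ) (x : EuclideanSpace ℝ (Fin N)) : ℝ :=
  kN N * (ε / (ε ^ 2 + normSq' x + (x (lastIdx N hN) + ε * xN0 N) ^ 2)) ^ (((N : ℝ) - 2) / 2)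

/-- The instanton `Û_ε` for the trace inequality. -/
def Uhat (N : ℕ) (hN : 0 < N) (ε : ℝ) (x : EuclideanSpace ℝ (Fin N)) : ℝ :=
  (ε / (normSq' x + (x (lastIdx N hN) + ε) ^ 2)) ^ (((N : ℝ) - 2) / 2)

/-- A cutoff `φ` is admissible if it is smooth, `[0,1]`-valued, `≡ 1` on `B₁(0) ∩ {x_N ≥ 0}`
and `≡ 0` on `{x_N ≥ 0} \ B₂(0)`. -/
structure AdmissibleCutoff (N : ℕ) (hN : 0 < N) (φ : EuclideanSpace ℝ (Fin N) → ℝ) : Prop where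
  smooth : ContDiff ℝ (⊤ : ℕ∞) φ
  mem01 : ∀ x, φ x ∈ Set.Icc (0 : ℝ) 1
  eq_one : ∀ x ∈ Metric.ball (0 : EuclideanSpace ℝ (Fin N)) 1 ∩ closedHalf N hN, φ x = 1
  eq_zero : ∀ x ∈ closedHalf N hN \ Metric.ball (0 : EuclideanSpace ℝ (Fin N)) 2, φ x = 0

/-- The test function `u_ε = K^{-1/2} φ U_ε`. -/
def ueps (N : ℕ) (hN : 0 < N) (φ : EuclideanSpace ℝ (Fin N) → ℝ) (ε : ℝ)
    (x : EuclideanSpace ℝ (Fin N)) : ℝ :=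
  Real.exp (-‖x‖ ^ 2 / 8) * φ x * Ueps N hN ε x

/-- The test function `û_ε = K^{-1/2} φ Û_ε`. -/
def uhat (N : ℕ) (hN : 0 < N) (φ : EuclideanSpace ℝ (Fin N) → ℝ) (ε : ℝ)
    (x : EuclideanSpace ℝ (Fin N)) : ℝ :=
  Real.exp (-‖x‖ ^ 2 / 8) * φ x * Uhat N hN ε x

/-- The area of the unit sphere in `ℝ^n` (equal to `n` times the volume of the unit ball). -/
def sphereArea (n : ℕ) : ℝ :=
  n * (volume (Metric.ball (0 : EuclideanSpace ℝ (Fin n)) 1)).toReal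

/-- The Beta function `B(a,b) = Γ(a)Γ(b)/Γ(a+b)`. -/
def betaFn (a b : ℝ) : ℝ := Real.Gamma a * Real.Gamma b / Real.Gamma (a + b)

/-- The constant `α_N`. -/
def alphaN (N : ℕ) (hN : 0 < N) : ℝ :=
  ((N : ℝ) - 2) * kN N ^ 2 / 2 *
    ∫ y in upperHalf N hN,
      (normSq' y + y (lastIdx N hN) * (y (lastIdx N hN) + xN0 N)) /
        (1 + normSq' y + (y (lastIdx N hN) + xN0 N) ^ 2) ^ (N - 1)

/-- The constant `β_N`. -/
def betaN (N : ℕ) (hN : 0 < N) : ℝ :=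
  kN N ^ pstar N / (2 * ((N : ℝ) - 2)) *
    ∫ y in upperHalf N hN,
      ‖y‖ ^ 2 / (1 + normSq' y + (y (lastIdx N hN) + xN0 N) ^ 2) ^ N

/-- The constant `γ_N`. -/
def gammaN (N : ℕ) : ℝ :=
  kN N ^ pstarb N / (4 * ((N : ℝ) - 2)) *
    ∫ y' : EuclideanSpace ℝ (Fin (N - 1)),
      ‖y'‖ ^ 2 / (1 + ‖y'‖ ^ 2 + xN0 N ^ 2) ^ (N - 1)

/-- The constant `d_N`. -/
def dN (N : ℕ) (hN : 0 < N) : ℝ :=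
  kN N ^ 2 *
    ∫ y in upperHalf N hN,
      ((1 + normSq' y + (y (lastIdx N hN) + xN0 N) ^ 2) ^ (N - 2))⁻¹

/-- The threshold `λ_N^* = α_N/d_N + (2/2^*)·β_N/d_N + (2/2_*)·γ_N/d_N`. -/
def lamStar (N : ℕ) (hN : 0 < N) : ℝ :=
  alphaN N hN / dN N hN + (2 / pstar N) * betaN N hN / dN N hN
    + (2 / pstarb N) * gammaN N / dN N hN

/-- The threshold `λ̄` of Theorem 1.2 (1). -/
def lamBar (N : ℕ) (hN : 0 < N) : ℝ :=
  if N = 3 then (3 + Real.sqrt 5) / 4 else if N = 4 then 1 else lamStar N hN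

/-- The threshold `λ̂` of Theorem 1.3 (1). -/
def lamHat (N : ℕ) : ℝ :=
  if N = 3 then (3 + Real.sqrt 5) / 4 else (N : ℝ) / 4 + ((N : ℝ) - 4) / 8

/-- The shifted bubble `φ_{ε,τ}`. -/
def phiB (N : ℕ) (hN : 0 < N) (ε τ : ℝ) (x : EuclideanSpace ℝ (Fin N)) : ℝ :=
  kN N * (ε / (ε ^ 2 + normSq' x + (x (lastIdx N hN) + ε * τ * xN0 N) ^ 2))
    ^ (((N : ℝ) - 2) / 2)

/-- The function `ψ(x) = e^{-|x|²/(8√5)}` (dimension 3). -/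
def psi3 (x : EuclideanSpace ℝ (Fin 3)) : ℝ := Real.exp (-‖x‖ ^ 2 / (8 * Real.sqrt 5))

/-- The test function `v_ε = K^{-1/2} ψ U_ε` (dimension 3). -/
def veps (ε : ℝ) (x : EuclideanSpace ℝ (Fin 3)) : ℝ :=
  Real.exp (-‖x‖ ^ 2 / 8) * psi3 x * Ueps 3 (by norm_num) ε x

/-- `K₁ = ∫_{ℝ³₊} |∇U_ε|²` (independent of `ε`). -/
def K1const : ℝ :=
  ∫ x in upperHalf 3 (by norm_num), ‖gradient (Ueps 3 (by norm_num) 1) x‖ ^ 2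

/-- `K₂ = ∫_{ℝ³₊} U_ε⁶` (independent of `ε`). -/
def K2const : ℝ := ∫ x in upperHalf 3 (by norm_num), Ueps 3 (by norm_num) 1 x ^ 6

/-- `K₃ = ∫_{ℝ²} U_ε(x',0)⁴ dx'` (independent of `ε`). -/
def K3const : ℝ :=
  ∫ x' : EuclideanSpace ℝ (Fin 2), Ueps 3 (by norm_num) 1 (pad 3 x') ^ 4

/-- `A_N = ∫_{ℝ^N_+} |∇Û_ε|²` (independent of `ε`). -/
def Ahat (N : ℕ) (hN : 0 < N) : ℝ :=
  ∫ x in upperHalf N hN, ‖gradient (Uhat N hN 1) x‖ ^ 2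

/-- The constant `α̂_N`. -/
def alphaHat (N : ℕ) : ℝ :=
  sphereArea (N - 1) * ((N : ℝ) - 2) / (4 * ((N : ℝ) - 4)) *
    (betaFn (((N : ℝ) + 1) / 2) (((N : ℝ) - 3) / 2)
      + 1 / ((N : ℝ) - 3) * betaFn (((N : ℝ) - 1) / 2) (((N : ℝ) - 1) / 2))

/-- The constant `γ̂_N`. -/
def gammaHat (N : ℕ) : ℝ :=
  sphereArea (N - 1) / (8 * ((N : ℝ) - 2)) * betaFn (((N : ℝ) + 1) / 2) (((N : ℝ) - 3) / 2)

/-- The constant `d̂_N`. -/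
def dHat (N : ℕ) : ℝ :=
  sphereArea (N - 1) / (2 * ((N : ℝ) - 4)) * betaFn (((N : ℝ) - 1) / 2) (((N : ℝ) - 3) / 2)

/-- `T_N = ∫_{ℝ^{N-1}} Û_ε(x',0)^{2_*} dx'` (independent of `ε`;
`T_N = B_N^{2_*/2}` in the paper's notation). -/
def Tconst (N : ℕ) (hN : 0 < N) : ℝ :=
  ∫ x' : EuclideanSpace ℝ (Fin (N - 1)), Uhat N hN 1 (pad N x') ^ pstarb N


section Helpers

variable {N : ℕ}

lemma pad_apply (N : ℕ) (x' : EuclideanSpace ℝ (Fin (N - 1))) (i : Fin N) :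
    pad N x' i = if h : (i : ℕ) < N - 1 then x' ⟨i, h⟩ else 0 := rfl

lemma pad_last (N : ℕ) (hN : 0 < N) (x' : EuclideanSpace ℝ (Fin (N - 1))) :
    pad N x' (lastIdx N hN) = 0 := by
  simp [pad_apply, lastIdx]

lemma normSq'_pad_aux {n : ℕ} (x' : EuclideanSpace ℝ (Fin (n + 1 - 1))) :
    normSq' (pad (n + 1) x') = ‖x'‖ ^ 2 := by
  have hx : ‖x'‖ ^ 2 = ∑ i, x' i ^ 2 := by
    rw [EuclideanSpace.norm_eq, Real.sq_sqrt (by positivity)]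
    simp [sq_abs]
  rw [hx, normSq', Fin.sum_univ_castSucc]
  simp [pad_apply]

lemma normSq'_pad (N : ℕ) (hN : 1 ≤ N) (x' : EuclideanSpace ℝ (Fin (N - 1))) :
    normSq' (pad N x') = ‖x'‖ ^ 2 := by
  obtain ⟨n, rfl⟩ : ∃ n, N = n + 1 := ⟨N - 1, by omega⟩
  exact normSq'_pad_aux x'

lemma norm_pad_aux {n : ℕ} (x' : EuclideanSpace ℝ (Fin (n + 1 - 1))) :
    ‖pad (n + 1) x'‖ = ‖x'‖ := by
  rw [EuclideanSpace.norm_eq, EuclideanSpace.norm_eq]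
  congr 1
  rw [Fin.sum_univ_castSucc]
  simp [pad_apply]

lemma norm_pad (N : ℕ) (hN : 1 ≤ N) (x' : EuclideanSpace ℝ (Fin (N - 1))) :
    ‖pad N x'‖ = ‖x'‖ := by
  obtain ⟨n, rfl⟩ : ∃ n, N = n + 1 := ⟨N - 1, by omega⟩
  exact norm_pad_aux x'

lemma normSq'_nonneg (x : EuclideanSpace ℝ (Fin N)) : 0 ≤ normSq' x :=
  Finset.sum_nonneg fun i _ => by split <;> positivity

lemma continuous_normSq' : Continuous (normSq' (N := N)) := by
  apply continuous_finset_sum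
  intro i _
  by_cases h : (i : ℕ) < N - 1
  · refine Continuous.congr ((EuclideanSpace.proj i).continuous.pow 2) fun x => ?_
    simp [h]
  · simpa [h] using (continuous_const : Continuous fun _ : EuclideanSpace ℝ (Fin N) => (0 : ℝ))

lemma continuous_pad (N : ℕ) : Continuous (pad N) := by
  unfold pad
  refine (ContinuousLinearEquiv.continuous _).comp ?_
  apply continuous_pi
  intro i
  by_cases h : (i : ℕ) < N - 1
  · simpa [h] using (EuclideanSpace.proj (⟨(i : ℕ), h⟩ : Fin (N - 1))).continuous
  · simpa [h] using (continuous_const : Continuous fun _ : EuclideanSpace ℝ (Fin (N - 1)) => (0 : ℝ))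

lemma kN_pos (hN : 3 ≤ N) : 0 < kN N := by
  have h3 : (3 : ℝ) ≤ (N : ℝ) := by exact_mod_cast hN
  apply Real.rpow_pos_of_pos
  apply Real.sqrt_pos.mpr
  nlinarith

lemma Ueps_pos (hN0 : 0 < N) (hN : 3 ≤ N) {ε : ℝ} (hε : 0 < ε) (x : EuclideanSpace ℝ (Fin N)) :
    0 < Ueps N hN0 ε x := by
  have hD : 0 < ε ^ 2 + normSq' x + (x (lastIdx N hN0) + ε * xN0 N) ^ 2 := by
    have := normSq'_nonneg x; positivity
  exact mul_pos (kN_pos hN) (Real.rpow_pos_of_pos (div_pos hε hD) _)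

lemma continuous_Ueps (hN0 : 0 < N) {ε : ℝ} (hε : 0 < ε) :
    Continuous (Ueps N hN0 ε) := by
  have hD : Continuous fun x : EuclideanSpace ℝ (Fin N) =>
      ε ^ 2 + normSq' x + (x (lastIdx N hN0) + ε * xN0 N) ^ 2 := by
    exact (continuous_const.add continuous_normSq').add
      (((EuclideanSpace.proj (lastIdx N hN0)).continuous.add continuous_const).pow 2)
  have hDpos : ∀ x : EuclideanSpace ℝ (Fin N),
      ε ^ 2 + normSq' x + (x (lastIdx N hN0) + ε * xN0 N) ^ 2 ≠ 0 := by
    intro x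
    have := normSq'_nonneg x
    positivity
  exact continuous_const.mul ((continuous_const.div hD hDpos).rpow_const
    fun x => Or.inl (div_ne_zero (ne_of_gt hε) (hDpos x)))

lemma continuous_ueps (hN0 : 0 < N) {φ : EuclideanSpace ℝ (Fin N) → ℝ}
    (hφ : AdmissibleCutoff N hN0 φ) {ε : ℝ} (hε : 0 < ε) :
    Continuous (ueps N hN0 φ ε) := by
  exact ((Real.continuous_exp.comp ((continuous_norm.pow 2).neg.div_const 8)).mul
    hφ.smooth.continuous).mul (continuous_Ueps hN0 hε)

lemma ueps_nonneg (hN0 : 0 < N) {φ : EuclideanSpace ℝ (Fin N) → ℝ}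
    (hφ : AdmissibleCutoff N hN0 φ) {ε : ℝ} (hε : 0 ≤ ε) (x : EuclideanSpace ℝ (Fin N)) :
    0 ≤ ueps N hN0 φ ε x := by
  have hD : 0 ≤ ε ^ 2 + normSq' x + (x (lastIdx N hN0) + ε * xN0 N) ^ 2 := by
    have := normSq'_nonneg x; positivity
  exact mul_nonneg (mul_nonneg (Real.exp_nonneg _) (hφ.mem01 x).1)
    (mul_nonneg (Real.rpow_nonneg (Real.sqrt_nonneg _) _)
      (Real.rpow_nonneg (div_nonneg hε hD) _))

lemma ueps_pad (hN : 1 ≤ N) (hN0 : 0 < N) (φ : EuclideanSpace ℝ (Fin N) → ℝ) (ε : ℝ)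
    (x' : EuclideanSpace ℝ (Fin (N - 1))) :
    ueps N hN0 φ ε (pad N x') = Real.exp (-‖x'‖ ^ 2 / 8) * φ (pad N x') *
      (kN N * (ε / (ε ^ 2 + ‖x'‖ ^ 2 + (ε * xN0 N) ^ 2)) ^ (((N : ℝ) - 2) / 2)) := by
  unfold ueps Ueps
  rw [norm_pad N hN, normSq'_pad N hN, pad_last N hN0, zero_add]

end Helpers

section Key

variable {N : ℕ}

lemma integrand_nonneg (hN0 : 0 < N) {φ : EuclideanSpace ℝ (Fin N) → ℝ}
    (hφ : AdmissibleCutoff N hN0 φ) {ε : ℝ} (hε : 0 < ε) (q : ℝ)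
    (x' : EuclideanSpace ℝ (Fin (N - 1))) :
    0 ≤ Real.exp (‖x'‖ ^ 2 / 4) * ueps N hN0 φ ε (pad N x') ^ q :=
  mul_nonneg (Real.exp_nonneg _) (Real.rpow_nonneg (ueps_nonneg hN0 hφ hε.le _) _)

lemma integrand_integrable (hN : 3 ≤ N) (hN0 : 0 < N) {φ : EuclideanSpace ℝ (Fin N) → ℝ}
    (hφ : AdmissibleCutoff N hN0 φ) {q : ℝ} (hq : 0 < q) {ε : ℝ} (hε : 0 < ε) :
    Integrable (fun x' : EuclideanSpace ℝ (Fin (N - 1)) =>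
      Real.exp (‖x'‖ ^ 2 / 4) * ueps N hN0 φ ε (pad N x') ^ q) := by
  have hcont : Continuous (fun x' : EuclideanSpace ℝ (Fin (N - 1)) =>
      Real.exp (‖x'‖ ^ 2 / 4) * ueps N hN0 φ ε (pad N x') ^ q) := by
    exact (Real.continuous_exp.comp ((continuous_norm.pow 2).div_const 4)).mul
      (((continuous_ueps hN0 hφ hε).comp (continuous_pad N)).rpow_const
        fun x => Or.inr hq.le)
  apply hcont.integrable_of_hasCompactSupport
  apply HasCompactSupport.intro (isCompact_closedBall (0 : EuclideanSpace ℝ (Fin (N - 1))) 2)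
  intro x' hx'
  have hx2 : (2 : ℝ) ≤ ‖x'‖ := by
    by_contra h
    exact hx' (Metric.mem_closedBall.mpr (by rw [dist_zero_right]; linarith))
  have hφ0 : φ (pad N x') = 0 := by
    apply hφ.eq_zero
    constructor
    · show 0 ≤ pad N x' (lastIdx N hN0)
      rw [pad_last N hN0]
    · intro hmem
      rw [Metric.mem_ball, dist_zero_right, norm_pad N (by omega)] at hmem
      linarith
  rw [ueps_pad (by omega) hN0, hφ0]
  rw [mul_zero, zero_mul, Real.zero_rpow (ne_of_gt hq), mul_zero]

set_option maxHeartbeats 1000000 in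
lemma key_lower (hN : 3 ≤ N) (hN0 : 0 < N) {φ : EuclideanSpace ℝ (Fin N) → ℝ}
    (hφ : AdmissibleCutoff N hN0 φ) {q : ℝ} (hq1 : 2 ≤ q) :
    ∃ b > (0 : ℝ), ∀ ε : ℝ, 0 < ε → ε < 1 →
      b * ε ^ ((N : ℝ) - 1 - ((N : ℝ) - 2) * q / 2)
        ≤ ∫ x' : EuclideanSpace ℝ (Fin (N - 1)),
            Real.exp (‖x'‖ ^ 2 / 4) * ueps N hN0 φ ε (pad N x') ^ q := by
  have hN3 : (3 : ℝ) ≤ (N : ℝ) := by exact_mod_cast hN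
  have hq0 : (0 : ℝ) < q := by linarith
  set m : ℝ := ((N : ℝ) - 2) / 2 with hm_def
  have hm : 0 ≤ m := by rw [hm_def]; linarith
  set c : ℝ := 2 + xN0 N ^ 2 with hc_def
  have hc : (0 : ℝ) < c := by have := sq_nonneg (xN0 N); rw [hc_def]; linarith
  have hk : 0 < kN N := kN_pos hN
  haveI : Nontrivial (EuclideanSpace ℝ (Fin (N - 1))) := by
    refine nontrivial_of_ne (EuclideanSpace.single (⟨0, by omega⟩ : Fin (N - 1)) (1 : ℝ)) 0 ?_
    intro h
    have := congrArg norm h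
    rw [EuclideanSpace.norm_single, norm_zero] at this
    simp at this
  set V : ℝ := (volume (Metric.ball (0 : EuclideanSpace ℝ (Fin (N - 1))) 1)).toReal with hV_def
  have hV : 0 < V := by
    rw [hV_def]
    apply ENNReal.toReal_pos (ne_of_gt (Metric.measure_ball_pos _ _ one_pos))
      (ne_of_lt measure_ball_lt_top)
  set c₂ : ℝ := Real.exp ((2 - q) / 8) * kN N ^ q * c ^ (-(m * q)) with hc₂_def
  have hc₂ : 0 < c₂ := by
    rw [hc₂_def]
    have h1 : (0 : ℝ) < kN N ^ q := Real.rpow_pos_of_pos hk q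
    have h2 : (0 : ℝ) < c ^ (-(m * q)) := Real.rpow_pos_of_pos hc _
    positivity
  refine ⟨c₂ * V, by positivity, ?_⟩
  intro ε hε hε1
  set S : Set (EuclideanSpace ℝ (Fin (N - 1))) := Metric.closedBall 0 ε with hS_def
  -- pointwise bound on S
  have hpt : ∀ x' ∈ S, c₂ * ε ^ (-(m * q))
      ≤ Real.exp (‖x'‖ ^ 2 / 4) * ueps N hN0 φ ε (pad N x') ^ q := by
    intro x' hx'
    have hxε : ‖x'‖ ≤ ε := by rwa [hS_def, Metric.mem_closedBall, dist_zero_right] at hx'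
    have hφ1 : φ (pad N x') = 1 := by
      apply hφ.eq_one
      constructor
      · rw [Metric.mem_ball, dist_zero_right, norm_pad N (by omega)]
        linarith
      · show 0 ≤ pad N x' (lastIdx N hN0)
        rw [pad_last N hN0]
    rw [ueps_pad (by omega) hN0, hφ1]
    set s : ℝ := ‖x'‖ ^ 2 with hs_def
    have hs0 : 0 ≤ s := by positivity
    have hsε : s ≤ ε ^ 2 := by
      rw [hs_def]
      exact pow_le_pow_left₀ (norm_nonneg _) hxε 2
    have hs1 : s ≤ 1 := by nlinarith
    set D : ℝ := ε ^ 2 + s + (ε * xN0 N) ^ 2 with hD_def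
    have hD : 0 < D := by rw [hD_def]; positivity
    set B : ℝ := ε / D with hB_def
    have hB0 : 0 ≤ B := by positivity
    have hBl : (c * ε)⁻¹ ≤ B := by
      have hDle : D ≤ c * ε ^ 2 := by
        rw [hD_def, hc_def]; nlinarith [sq_nonneg (xN0 N)]
      have heq : (c * ε)⁻¹ = ε / (c * ε ^ 2) := by
        field_simp
      rw [heq, hB_def]
      gcongr
    -- rewrite RHS
    have eR : Real.exp (s / 4) * (Real.exp (-s / 8) * 1 * (kN N * B ^ m)) ^ q
        = Real.exp (s * (2 - q) / 8) * (kN N ^ q * B ^ (m * q)) := by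
      rw [mul_one, Real.mul_rpow (Real.exp_nonneg _) (by positivity),
        Real.mul_rpow hk.le (Real.rpow_nonneg hB0 _), ← Real.exp_mul,
        ← Real.rpow_mul hB0, ← mul_assoc, ← Real.exp_add]
      have : s / 4 + -s / 8 * q = s * (2 - q) / 8 := by ring
      rw [this]
    have eL : c₂ * ε ^ (-(m * q))
        = Real.exp ((2 - q) / 8) * (kN N ^ q * ((c * ε)⁻¹) ^ (m * q)) := by
      rw [hc₂_def]
      rw [Real.inv_rpow (by positivity), ← Real.rpow_neg (by positivity),
        Real.mul_rpow hc.le hε.le]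
      ring
    rw [eR, eL]
    have hexp : Real.exp ((2 - q) / 8) ≤ Real.exp (s * (2 - q) / 8) := by
      apply Real.exp_le_exp.mpr
      nlinarith
    have hBpow : ((c * ε)⁻¹) ^ (m * q) ≤ B ^ (m * q) :=
      Real.rpow_le_rpow (by positivity) hBl (by positivity)
    have h1 : (0 : ℝ) < kN N ^ q := Real.rpow_pos_of_pos hk q
    have h2 : (0 : ℝ) ≤ ((c * ε)⁻¹) ^ (m * q) := Real.rpow_nonneg (by positivity) _
    gcongr
  -- integral chain
  have hfi := integrand_integrable hN hN0 hφ hq0 hε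
  have hSm : MeasurableSet S := measurableSet_closedBall
  have h2 : ∫ x' in S, Real.exp (‖x'‖ ^ 2 / 4) * ueps N hN0 φ ε (pad N x') ^ q
      ≤ ∫ x' : EuclideanSpace ℝ (Fin (N - 1)),
          Real.exp (‖x'‖ ^ 2 / 4) * ueps N hN0 φ ε (pad N x') ^ q :=
    setIntegral_le_integral hfi (Filter.Eventually.of_forall (integrand_nonneg hN0 hφ hε q))
  have h1 : ∫ _x' in S, c₂ * ε ^ (-(m * q))
      ≤ ∫ x' in S, Real.exp (‖x'‖ ^ 2 / 4) * ueps N hN0 φ ε (pad N x') ^ q := by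
    apply setIntegral_mono_on (integrableOn_const measure_closedBall_lt_top.ne)
      hfi.integrableOn hSm hpt
  have h0 : (volume S).toReal * (c₂ * ε ^ (-(m * q)))
      = ∫ _x' in S, c₂ * ε ^ (-(m * q)) := by
    rw [setIntegral_const, smul_eq_mul, Measure.real]
  -- volume lower bound
  have hvol : ε ^ (N - 1 : ℕ) * V ≤ (volume S).toReal := by
    have hsub : Metric.ball (0 : EuclideanSpace ℝ (Fin (N - 1))) ε ⊆ S :=
      Metric.ball_subset_closedBall
    have hballeq : (volume (Metric.ball (0 : EuclideanSpace ℝ (Fin (N - 1))) ε)).toReal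
        = ε ^ (N - 1 : ℕ) * V := by
      rw [Measure.addHaar_ball _ _ hε.le, ENNReal.toReal_mul,
        ENNReal.toReal_ofReal (by positivity), finrank_euclideanSpace_fin, hV_def]
    rw [← hballeq]
    exact ENNReal.toReal_mono (ne_of_lt measure_closedBall_lt_top) (measure_mono hsub)
  have hεpow : ε ^ (N - 1 : ℕ) * ε ^ (-(m * q)) = ε ^ ((N : ℝ) - 1 - ((N : ℝ) - 2) * q / 2) := by
    rw [← Real.rpow_natCast ε (N - 1), ← Real.rpow_add hε]
    congr 1
    rw [Nat.cast_sub (by omega), Nat.cast_one, hm_def]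
    ring
  calc c₂ * V * ε ^ ((N : ℝ) - 1 - ((N : ℝ) - 2) * q / 2)
      = (ε ^ (N - 1 : ℕ) * V) * (c₂ * ε ^ (-(m * q))) := by rw [← hεpow]; ring
    _ ≤ (volume S).toReal * (c₂ * ε ^ (-(m * q))) := by
        have : (0 : ℝ) ≤ c₂ * ε ^ (-(m * q)) := by positivity
        exact mul_le_mul_of_nonneg_right hvol this
    _ = ∫ _x' in S, c₂ * ε ^ (-(m * q)) := h0
    _ ≤ ∫ x' in S, Real.exp (‖x'‖ ^ 2 / 4) * ueps N hN0 φ ε (pad N x') ^ q := h1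
    _ ≤ _ := h2

end Key

set_option maxHeartbeats 1600000 in
lemma key_lower_log (hN0 : 0 < 3) {φ : EuclideanSpace ℝ (Fin 3) → ℝ}
    (hφ : AdmissibleCutoff 3 hN0 φ) :
    ∃ b > (0 : ℝ), ∀ ε : ℝ, 0 < ε → ε < 1 / 4 →
      b * ε * |Real.log ε|
        ≤ ∫ x' : EuclideanSpace ℝ (Fin (3 - 1)),
            Real.exp (‖x'‖ ^ 2 / 4) * ueps 3 hN0 φ ε (pad 3 x') ^ (2 : ℝ) := by
  have hk : 0 < kN 3 := kN_pos (by norm_num)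
  set k2 : ℝ := kN 3 ^ (2 : ℝ) with hk2_def
  have hk2 : 0 < k2 := Real.rpow_pos_of_pos hk 2
  set c : ℝ := 2 + xN0 3 ^ 2 with hc_def
  have hc : (0 : ℝ) < c := by have := sq_nonneg (xN0 3); rw [hc_def]; linarith
  haveI : Nontrivial (EuclideanSpace ℝ (Fin (3 - 1))) := by
    refine nontrivial_of_ne (EuclideanSpace.single (⟨0, by omega⟩ : Fin (3 - 1)) (1 : ℝ)) 0 ?_
    intro h
    have := congrArg norm h
    rw [EuclideanSpace.norm_single, norm_zero] at this
    simp at this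
  set V : ℝ := (volume (Metric.ball (0 : EuclideanSpace ℝ (Fin (3 - 1))) 1)).toReal with hV_def
  have hV : 0 < V := by
    rw [hV_def]
    exact ENNReal.toReal_pos (ne_of_gt (Metric.measure_ball_pos _ _ one_pos))
      (ne_of_lt measure_ball_lt_top)
  refine ⟨k2 / c * V, by positivity, ?_⟩
  intro ε hε hε1
  set S : Set (EuclideanSpace ℝ (Fin (3 - 1))) :=
    Metric.closedBall 0 (1 / 2) \ Metric.ball 0 ε with hS_def
  have hmemS : ∀ x : EuclideanSpace ℝ (Fin (3 - 1)), x ∈ S ↔ ε ≤ ‖x‖ ∧ ‖x‖ ≤ 1 / 2 := by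
    intro x
    rw [hS_def, Set.mem_diff, Metric.mem_closedBall, Metric.mem_ball, dist_zero_right, not_lt]
    tauto
  have hSm : MeasurableSet S := measurableSet_closedBall.diff measurableSet_ball
  have hScomp : IsCompact S := (isCompact_closedBall _ _).diff Metric.isOpen_ball
  -- pointwise bound on S
  have hpt : ∀ x' ∈ S, k2 / c * ε * (‖x'‖ ^ 2)⁻¹
      ≤ Real.exp (‖x'‖ ^ 2 / 4) * ueps 3 hN0 φ ε (pad 3 x') ^ (2 : ℝ) := by
    intro x' hx'
    obtain ⟨hxl, hxu⟩ := (hmemS x').mp hx'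
    have hφ1 : φ (pad 3 x') = 1 := by
      apply hφ.eq_one
      constructor
      · rw [Metric.mem_ball, dist_zero_right, norm_pad 3 (by omega)]
        linarith
      · show 0 ≤ pad 3 x' (lastIdx 3 hN0)
        rw [pad_last 3 hN0]
    rw [ueps_pad (by omega) hN0, hφ1]
    set s : ℝ := ‖x'‖ ^ 2 with hs_def
    have hs0 : 0 < s := by
      rw [hs_def]
      have : 0 < ‖x'‖ := lt_of_lt_of_le hε hxl
      positivity
    have hεs : ε ^ 2 ≤ s := by
      rw [hs_def]
      exact pow_le_pow_left₀ hε.le hxl 2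
    set D : ℝ := ε ^ 2 + s + (ε * xN0 3) ^ 2 with hD_def
    have hD : 0 < D := by rw [hD_def]; positivity
    set B : ℝ := ε / D with hB_def
    have hB0 : 0 ≤ B := by positivity
    have eR3 : Real.exp (s / 4) *
        (Real.exp (-s / 8) * 1 * (kN 3 * B ^ ((((3 : ℕ) : ℝ) - 2) / 2))) ^ (2 : ℝ)
        = k2 * B := by
      rw [mul_one, Real.mul_rpow (Real.exp_nonneg _) (by positivity),
        Real.mul_rpow hk.le (Real.rpow_nonneg hB0 _), ← Real.exp_mul,
        ← Real.rpow_mul hB0]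
      rw [show (((3 : ℕ) : ℝ) - 2) / 2 * 2 = 1 by norm_num, Real.rpow_one]
      rw [show -s / 8 * 2 = -(s / 4) by ring, ← mul_assoc, ← Real.exp_add]
      rw [show s / 4 + -(s / 4) = 0 by ring, Real.exp_zero, one_mul, hk2_def]
    rw [eR3]
    have hDle : D ≤ c * s := by
      rw [hD_def, hc_def]
      nlinarith [sq_nonneg (xN0 3), sq_nonneg ε]
    have heq : k2 / c * ε * s⁻¹ = k2 * (ε / (c * s)) := by
      field_simp
    rw [heq, hB_def]
    gcongr
  -- the lower-bound function is integrable on S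
  have hgint : IntegrableOn
      (fun x' : EuclideanSpace ℝ (Fin (3 - 1)) => k2 / c * ε * (‖x'‖ ^ 2)⁻¹) S := by
    apply ContinuousOn.integrableOn_compact hScomp
    apply ContinuousOn.mul continuousOn_const
    apply ContinuousOn.inv₀ (continuous_norm.pow 2).continuousOn
    intro x hx
    have : 0 < ‖x‖ := lt_of_lt_of_le hε ((hmemS x).mp hx).1
    exact pow_ne_zero 2 this.ne'
  have hfi := integrand_integrable (N := 3) (by norm_num) hN0 hφ (by norm_num : (0:ℝ) < 2) hε
  -- computation of the radial integral
  have hI : ∫ x in S, (‖x‖ ^ 2)⁻¹ = 2 * (V * Real.log (1 / 2 / ε)) := by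
    have hind : S.indicator (fun x : EuclideanSpace ℝ (Fin (3 - 1)) => (‖x‖ ^ 2)⁻¹)
        = fun x => (Set.Icc ε (1 / 2)).indicator (fun r : ℝ => (r ^ 2)⁻¹) ‖x‖ := by
      funext x
      by_cases hx : x ∈ S
      · rw [Set.indicator_of_mem hx,
          Set.indicator_of_mem (Set.mem_Icc.mpr ((hmemS x).mp hx))]
      · rw [Set.indicator_of_notMem hx, Set.indicator_of_notMem]
        intro hmem
        exact hx ((hmemS x).mpr (Set.mem_Icc.mp hmem))
    rw [← integral_indicator hSm, hind,
      MeasureTheory.integral_fun_norm_addHaar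
        (volume : Measure (EuclideanSpace ℝ (Fin (3 - 1))))
        ((Set.Icc ε (1 / 2)).indicator (fun r : ℝ => (r ^ 2)⁻¹))]
    rw [finrank_euclideanSpace_fin]
    have hinner : ∫ y in Set.Ioi (0 : ℝ),
        y ^ (2 - 1) • (Set.Icc ε (1 / 2)).indicator (fun r : ℝ => (r ^ 2)⁻¹) y
        = Real.log (1 / 2 / ε) := by
      have hcong : ∀ y ∈ Set.Ioi (0 : ℝ),
          y ^ (2 - 1) • (Set.Icc ε (1 / 2)).indicator (fun r : ℝ => (r ^ 2)⁻¹) y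
          = (Set.Icc ε (1 / 2)).indicator (fun r : ℝ => r⁻¹) y := by
        intro y hy
        have hy0 : y ≠ 0 := ne_of_gt hy
        by_cases h : y ∈ Set.Icc ε (1 / 2)
        · rw [Set.indicator_of_mem h, Set.indicator_of_mem h, pow_one, smul_eq_mul, sq,
            mul_inv, ← mul_assoc, mul_inv_cancel₀ hy0, one_mul]
        · rw [Set.indicator_of_notMem h, Set.indicator_of_notMem h, smul_zero]
      rw [MeasureTheory.setIntegral_congr_fun measurableSet_Ioi hcong,
        MeasureTheory.setIntegral_indicator measurableSet_Icc,
        Set.inter_eq_self_of_subset_right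
          (show Set.Icc ε (1 / 2) ⊆ Set.Ioi 0 from fun y hy => lt_of_lt_of_le hε hy.1),
        MeasureTheory.integral_Icc_eq_integral_Ioc,
        ← intervalIntegral.integral_of_le (by linarith : ε ≤ 1 / 2)]
      exact integral_inv (Set.notMem_uIcc_of_lt hε (by norm_num))
    rw [hinner, nsmul_eq_mul, smul_eq_mul, Measure.real, ← hV_def]
    norm_num
  -- log estimate
  have hlogε : Real.log ε < 0 := Real.log_neg hε (by linarith)
  have habs : |Real.log ε| = -Real.log ε := abs_of_neg hlogε
  have hlog : |Real.log ε| / 2 ≤ Real.log (1 / 2 / ε) := by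
    have h4 : Real.log ε ≤ Real.log (1 / 4) := Real.log_le_log hε (by linarith)
    have h14 : Real.log (1 / 4 : ℝ) = -(2 * Real.log 2) := by
      rw [show (1 / 4 : ℝ) = ((2 : ℝ) ^ 2)⁻¹ by norm_num, Real.log_inv, Real.log_pow]
      norm_num
    have hdiv : Real.log (1 / 2 / ε) = -Real.log 2 - Real.log ε := by
      rw [Real.log_div (by norm_num) (ne_of_gt hε), Real.log_div one_ne_zero (by norm_num),
        Real.log_one]
      ring
    rw [habs, hdiv]
    have h2pos : 0 < Real.log 2 := Real.log_pos (by norm_num)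
    linarith
  -- integral chain
  have h2 : ∫ x' in S, Real.exp (‖x'‖ ^ 2 / 4) * ueps 3 hN0 φ ε (pad 3 x') ^ (2 : ℝ)
      ≤ ∫ x' : EuclideanSpace ℝ (Fin (3 - 1)),
          Real.exp (‖x'‖ ^ 2 / 4) * ueps 3 hN0 φ ε (pad 3 x') ^ (2 : ℝ) :=
    setIntegral_le_integral hfi (Filter.Eventually.of_forall (integrand_nonneg hN0 hφ hε 2))
  have h1 : ∫ x' in S, k2 / c * ε * (‖x'‖ ^ 2)⁻¹
      ≤ ∫ x' in S, Real.exp (‖x'‖ ^ 2 / 4) * ueps 3 hN0 φ ε (pad 3 x') ^ (2 : ℝ) :=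
    setIntegral_mono_on hgint hfi.integrableOn hSm hpt
  have h0 : ∫ x' in S, k2 / c * ε * (‖x'‖ ^ 2)⁻¹
      = k2 / c * ε * (2 * (V * Real.log (1 / 2 / ε))) := by
    rw [MeasureTheory.integral_const_mul, hI]
  calc k2 / c * V * ε * |Real.log ε|
      = k2 / c * ε * (2 * (V * (|Real.log ε| / 2))) := by ring
    _ ≤ k2 / c * ε * (2 * (V * Real.log (1 / 2 / ε))) := by gcongr
    _ = ∫ x' in S, k2 / c * ε * (‖x'‖ ^ 2)⁻¹ := h0.symm
    _ ≤ ∫ x' in S, Real.exp (‖x'‖ ^ 2 / 4) * ueps 3 hN0 φ ε (pad 3 x') ^ (2 : ℝ) := h1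
    _ ≤ _ := h2

/-- **Lemma 4.7: lower bound for the boundary `L^q` norm of `u_ε`.** -/
theorem boundary_Lq_lower_bound_ueps
    (N : ℕ) (hN : 3 ≤ N) (q : ℝ) (hq1 : 2 ≤ q) (hq2 : q < pstarb N)
    (φ : EuclideanSpace ℝ (Fin N) → ℝ) (hφ : AdmissibleCutoff N (by omega) φ) :
    ∃ b > (0 : ℝ), ∃ ε₀ > (0 : ℝ), ∀ ε : ℝ, 0 < ε → ε < ε₀ →
      ((2 < q →
        b * ε ^ ((N : ℝ) - 1 - ((N : ℝ) - 2) * q / 2)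
          ≤ ∫ x' : EuclideanSpace ℝ (Fin (N - 1)),
              Real.exp (‖x'‖ ^ 2 / 4) * ueps N (by omega) φ ε (pad N x') ^ q) ∧
      (q = 2 → 4 ≤ N →
        b * ε
          ≤ ∫ x' : EuclideanSpace ℝ (Fin (N - 1)),
              Real.exp (‖x'‖ ^ 2 / 4) * ueps N (by omega) φ ε (pad N x') ^ q) ∧
      (q = 2 → N = 3 →
        b * ε * |Real.log ε|
          ≤ ∫ x' : EuclideanSpace ℝ (Fin (N - 1)),
              Real.exp (‖x'‖ ^ 2 / 4) * ueps N (by omega) φ ε (pad N x') ^ q)) := by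
  
  by_cases h3 : N = 3
  · subst h3
    obtain ⟨b1, hb1, hkey⟩ := key_lower hN (by omega) hφ hq1
    obtain ⟨b3, hb3, hkey3⟩ := key_lower_log (by omega) hφ
    refine ⟨min b1 b3, lt_min hb1 hb3, 1 / 4, by norm_num, ?_⟩
    intro ε hε hε4
    refine ⟨?_, ?_, ?_⟩
    · intro _
      calc min b1 b3 * ε ^ ((3 : ℝ) - 1 - ((3 : ℝ) - 2) * q / 2)
          ≤ b1 * ε ^ ((3 : ℝ) - 1 - ((3 : ℝ) - 2) * q / 2) := by
            have : (0 : ℝ) ≤ ε ^ ((3 : ℝ) - 1 - ((3 : ℝ) - 2) * q / 2) :=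
              Real.rpow_nonneg hε.le _
            exact mul_le_mul_of_nonneg_right (min_le_left _ _) this
        _ ≤ _ := hkey ε hε (by linarith)
    · intro _ h4
      omega
    · intro hq2' _
      subst hq2'
      calc min b1 b3 * ε * |Real.log ε| ≤ b3 * ε * |Real.log ε| := by
            exact mul_le_mul_of_nonneg_right
              (mul_le_mul_of_nonneg_right (min_le_right _ _) hε.le) (abs_nonneg _)
        _ ≤ _ := hkey3 ε hε hε4
  · obtain ⟨b1, hb1, hkey⟩ := key_lower hN (by omega) hφ hq1
    refine ⟨b1, hb1, 1 / 4, by norm_num, ?_⟩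
    intro ε hε hε4
    refine ⟨fun _ => hkey ε hε (by linarith), ?_, fun _ hN3 => absurd hN3 h3⟩
    intro hq2' _
    subst hq2'
    have h := hkey ε hε (by linarith)
    rwa [show (N : ℝ) - 1 - ((N : ℝ) - 2) * 2 / 2 = 1 by ring, Real.rpow_one] at h
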